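/- arXiv:1208.3504 — 3 statements merged into one kernel-verified Lean document; each statement's English description precedes it below -/
import Mathlib

section
/- Let ℙ = (P,≤) be the random (generic) poset, a ∈ P, and A = {x : x < a}, C = {x : x > a}, B = {x : x ⊥ a}. Then the rotation R_{A,C} applied to the poset P \ {a} yields a poset satisfying the extension property (EXT), and hence isomorphic to the random poset. In particular, there exists a rotation of the random poset whose image is isomorphic to the random poset. -/
universe u

variable {P : Type u}

/-- `A` is a downset (downward closed set) w.r.t. the relation `le`. -/
def IsDownset (le : P → P → Prop) (A : Set P) : Prop :=
  ∀ ⦃x⦄, x ∈ A → ∀ ⦃y⦄, le y x → y ∈ A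

/-- `C` is an upset (upward closed set) w.r.t. the relation `le`. -/
def IsUpset (le : P → P → Prop) (C : Set P) : Prop :=
  ∀ ⦃x⦄, x ∈ C → ∀ ⦃y⦄, le x y → y ∈ C

/-- `x` and `y` are incomparable w.r.t. `le`. -/
def Incomp (le : P → P → Prop) (x y : P) : Prop := ¬ le x y ∧ ¬ le y x

/-- Strictly less: `le x y` and `x ≠ y`. -/
def SLT (le : P → P → Prop) (x y : P) : Prop := le x y ∧ x ≠ y

/-- The conditions under which the rotation `R_{A,C}` is defined:
`A`, `C` disjoint, `A` a downset, `C` an upset, and every element of `A`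
strictly below every element of `C`. -/
def RotOK (le : P → P → Prop) (A C : Set P) : Prop :=
  Disjoint A C ∧ IsDownset le A ∧ IsUpset le C ∧
    ∀ a ∈ A, ∀ c ∈ C, le a c ∧ a ≠ c

/-- The rotation `R_{A,C}` of the relation `le`; the middle block `B` is the
complement of `A ∪ C`. -/
def Rot (le : P → P → Prop) (A C : Set P) : P → P → Prop := fun x y =>
  (((x ∈ A ∧ y ∈ A) ∨ (x ∉ A ∧ x ∉ C ∧ y ∉ A ∧ y ∉ C) ∨ (x ∈ C ∧ y ∈ C)) ∧ le x y) ∨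
  (x ∉ A ∧ x ∉ C ∧ y ∈ A ∧ Incomp le x y) ∨
  (x ∈ C ∧ y ∈ A) ∨
  (x ∈ C ∧ y ∉ A ∧ y ∉ C ∧ Incomp le x y)

/-- One rotation step between two relations on the same domain. -/
def RotStep (le le' : P → P → Prop) : Prop :=
  ∃ A C, RotOK le A C ∧ le' = Rot le A C

/-- Rotation-equivalence: the reflexive-transitive closure of rotation steps. -/
def RotEquiv (le le' : P → P → Prop) : Prop :=
  Relation.ReflTransGen RotStep le le'

/-- Restriction of a relation to a subset (as a relation on the subtype). -/
def restrictRel (le : P → P → Prop) (S : Set P) : S → S → Prop :=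
  fun x y => le x.1 y.1

/-- The set of maximal elements of a relation. -/
def maxSet (le : P → P → Prop) : Set P := {x | ∀ y, le x y → y = x}

/-- The rotation class `O₂` of a three element poset `{a,b,c}`:
chains `a<b<c`, `b<c<a`, `c<a<b`, and the posets with single comparability
`a<b`, `b<c`, `c<a`. -/
def O2rel (le : P → P → Prop) (a b c : P) : Prop :=
  (SLT le a b ∧ SLT le b c) ∨ (SLT le b c ∧ SLT le c a) ∨ (SLT le c a ∧ SLT le a b) ∨
  (SLT le a b ∧ Incomp le a c ∧ Incomp le b c) ∨
  (SLT le b c ∧ Incomp le b a ∧ Incomp le c a) ∨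
  (SLT le c a ∧ Incomp le c b ∧ Incomp le a b)

/-- The rotation class `O₃`: the dual of `O₂`. -/
def O3rel (le : P → P → Prop) (a b c : P) : Prop := O2rel le c b a

/-- The rotation class `O₁`: the antichain together with the `V` and `Λ` shaped
three element posets. -/
def O1rel (le : P → P → Prop) (a b c : P) : Prop :=
  (Incomp le a b ∧ Incomp le b c ∧ Incomp le a c) ∨
  (SLT le a b ∧ SLT le a c ∧ Incomp le b c) ∨
  (SLT le b a ∧ SLT le b c ∧ Incomp le a c) ∨
  (SLT le c a ∧ SLT le c b ∧ Incomp le a b) ∨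
  (SLT le b a ∧ SLT le c a ∧ Incomp le b c) ∨
  (SLT le a b ∧ SLT le c b ∧ Incomp le a c) ∨
  (SLT le a c ∧ SLT le b c ∧ Incomp le a b)

/-- The extension property (EXT) characterizing the random poset: every
one-point extension of a finite subposet is realized by some element. -/
def ExtProp (le : P → P → Prop) : Prop :=
  ∀ Q : Set P, Q.Finite → ∀ D U : Set P, D ⊆ Q → U ⊆ Q → Disjoint D U →
    (∀ x ∈ Q, ∀ d ∈ D, le x d → x ∈ D) →
    (∀ x ∈ Q, ∀ u ∈ U, le u x → x ∈ U) →
    (∀ d ∈ D, ∀ u ∈ U, le d u ∧ d ≠ u) →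
    ∃ s, s ∉ Q ∧ (∀ d ∈ D, le d s ∧ d ≠ s) ∧ (∀ u ∈ U, le s u ∧ s ≠ u) ∧
      ∀ x ∈ Q, x ∉ D → x ∉ U → Incomp le s x


/-!
Rotation can be undone: `Rot (Rot le A C) C A = le`. Hence the `≤`-relations of a point of
`P \ {a}` to the others are determined by its rotated relations together with its block (below,
above or incomparable to `a`). A one-point extension of a finite `Q` in the rotated order is
therefore realized by realizing, with (EXT) for `≤`, a suitable one-point extension of `Q ∪ {a}`;
the block of the new point is forced: below `a` if `D` meets `A`, above `a` if `U` meets `C` (the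
dual case), incomparable to `a` otherwise. Two countable partial orders with (EXT) are isomorphic
by back and forth.
-/

section ExtensionType

variable {α : Type*} (r : α → α → Prop)

def IsExtensionType (Q D U : Set α) : Prop :=
  Q.Finite ∧ D ⊆ Q ∧ U ⊆ Q ∧ Disjoint D U ∧
    (∀ x ∈ Q, ∀ d ∈ D, r x d → x ∈ D) ∧ (∀ x ∈ Q, ∀ u ∈ U, r u x → x ∈ U) ∧
    ∀ d ∈ D, ∀ u ∈ U, r d u ∧ d ≠ u

def Realizes (Q D U : Set α) (s : α) : Prop :=
  s ∉ Q ∧ (∀ d ∈ D, r d s ∧ d ≠ s) ∧ (∀ u ∈ U, r s u ∧ s ≠ u) ∧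
    ∀ x ∈ Q, x ∉ D → x ∉ U → Incomp r s x

theorem extProp_iff :
    ExtProp r ↔ ∀ Q D U, IsExtensionType r Q D U → ∃ s, Realizes r Q D U s :=
  ⟨fun h _ _ _ ⟨hQ, hD, hU, hDU, hcD, hcU, hlt⟩ => h _ hQ _ _ hD hU hDU hcD hcU hlt,
    fun h _ hQ _ _ hD hU hDU hcD hcU hlt => h _ _ _ ⟨hQ, hD, hU, hDU, hcD, hcU, hlt⟩⟩

variable {r}

theorem IsExtensionType.swap {Q D U : Set α} (h : IsExtensionType r Q D U) :
    IsExtensionType (Function.swap r) Q U D :=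
  have ⟨hQ, hD, hU, hDU, hcD, hcU, hlt⟩ := h
  ⟨hQ, hU, hD, hDU.symm, hcU, hcD, fun u hu d hd => ⟨(hlt d hd u hu).1, (hlt d hd u hu).2.symm⟩⟩

theorem Realizes.swap {Q D U : Set α} {s : α} (h : Realizes r Q D U s) :
    Realizes (Function.swap r) Q U D s :=
  have ⟨hs, hD, hU, hI⟩ := h
  ⟨hs, fun u hu => ⟨(hU u hu).1, (hU u hu).2.symm⟩, fun d hd => ⟨(hD d hd).1, (hD d hd).2.symm⟩,
    fun x hx hxU hxD => (hI x hx hxD hxU).symm⟩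

theorem ExtProp.swap (h : ExtProp r) : ExtProp (Function.swap r) :=
  (extProp_iff _).2 fun _ _ _ hT => ((extProp_iff r).1 h _ _ _ hT.swap).imp fun _ => Realizes.swap

end ExtensionType

section BackAndForth

variable {α β : Type*} {r : α → α → Prop} {s : β → β → Prop}

theorem nonempty_relIso_of_graph [IsPartialOrder α r] [IsPartialOrder β s] (G : Set (α × β))
    (hG : ∀ p ∈ G, ∀ q ∈ G, r p.1 q.1 ↔ s p.2 q.2)
    (hdom : ∀ x, ∃ y, (x, y) ∈ G) (hcod : ∀ y, ∃ x, (x, y) ∈ G) : Nonempty (r ≃r s) := by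
  choose F hF using hdom
  have hFG : ∀ {x y}, (x, y) ∈ G → F x = y := fun {x y} hxy =>
    antisymm ((hG _ (hF x) _ hxy).1 (refl_of r x)) ((hG _ hxy _ (hF x)).1 (refl_of r x))
  have hinj : F.Injective := fun x x' h =>
    antisymm ((hG _ (hF x) _ (hF x')).2 (h ▸ refl_of s _))
      ((hG _ (hF x') _ (hF x)).2 (h ▸ refl_of s _))
  have hsurj : F.Surjective := fun y => (hcod y).imp fun x => hFG
  exact ⟨⟨Equiv.ofBijective F ⟨hinj, hsurj⟩, (hG _ (hF _) _ (hF _)).symm⟩⟩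

variable (r s)

abbrev FinPartialIso : Type _ :=
  {f : Finset (α × β) // ∀ p ∈ f, ∀ q ∈ f, r p.1 q.1 ↔ s p.2 q.2}

variable {r s}

namespace FinPartialIso

open Classical in
noncomputable def insert [Std.Refl r] [Std.Refl s] (f : FinPartialIso r s) (x : α) (y : β)
    (h : ∀ p ∈ f.1, (r p.1 x ↔ s p.2 y) ∧ (r x p.1 ↔ s y p.2)) : FinPartialIso r s :=
  ⟨Insert.insert (x, y) f.1, by
    intro p hp q hq
    rw [Finset.mem_insert] at hp hq
    rcases hp with rfl | hp <;> rcases hq with rfl | hq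
    · exact iff_of_true (refl_of r _) (refl_of s _)
    · exact (h q hq).2
    · exact (h p hp).1
    · exact f.2 p hp q hq⟩

open Classical in
theorem mem_insert [Std.Refl r] [Std.Refl s] (f : FinPartialIso r s) {x : α} {y : β}
    (h : ∀ p ∈ f.1, (r p.1 x ↔ s p.2 y) ∧ (r x p.1 ↔ s y p.2)) : (x, y) ∈ (f.insert x y h).1 :=
  Finset.mem_insert_self _ _

open Classical in
theorem le_insert [Std.Refl r] [Std.Refl s] (f : FinPartialIso r s) {x : α} {y : β}
    (h : ∀ p ∈ f.1, (r p.1 x ↔ s p.2 y) ∧ (r x p.1 ↔ s y p.2)) : f ≤ f.insert x y h :=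
  Finset.subset_insert _ _

def swap (f : FinPartialIso r s) : FinPartialIso s r :=
  ⟨f.1.map (Equiv.prodComm α β).toEmbedding, by
    simp only [Finset.mem_map, Equiv.coe_toEmbedding, Equiv.prodComm_apply]
    rintro _ ⟨p, hp, rfl⟩ _ ⟨q, hq, rfl⟩
    exact (f.2 p hp q hq).symm⟩

variable [IsPartialOrder α r] [IsPartialOrder β s]

theorem fst_eq_of_snd_eq (f : FinPartialIso r s) {p q : α × β} (hp : p ∈ f.1) (hq : q ∈ f.1)
    (h : p.2 = q.2) : p.1 = q.1 :=
  antisymm ((f.2 p hp q hq).2 (h ▸ refl_of s _)) ((f.2 q hq p hp).2 (h ▸ refl_of s _))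

theorem snd_mem_image_iff (f : FinPartialIso r s) (φ : α → Prop) {p : α × β} (hp : p ∈ f.1) :
    p.2 ∈ Prod.snd '' {q | q ∈ f.1 ∧ φ q.1} ↔ φ p.1 := by
  refine ⟨?_, fun h => ⟨p, ⟨hp, h⟩, rfl⟩⟩
  rintro ⟨q, ⟨hq, hφ⟩, he⟩
  rwa [← f.fst_eq_of_snd_eq hq hp he]

theorem isExtensionType_image (f : FinPartialIso r s) {x : α} (hx : ∀ y, (x, y) ∉ f.1) :
    IsExtensionType s (Prod.snd '' {q | q ∈ f.1}) (Prod.snd '' {q | q ∈ f.1 ∧ r q.1 x})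
      (Prod.snd '' {q | q ∈ f.1 ∧ r x q.1}) := by
  refine ⟨f.1.finite_toSet.image _, Set.image_mono fun q hq => hq.1,
    Set.image_mono fun q hq => hq.1, ?_, ?_, ?_, ?_⟩
  all_goals simp only [Set.disjoint_left, Set.forall_mem_image, Set.mem_ofPred_eq]
  · intro p hp hpU
    rw [f.snd_mem_image_iff (r x ·) hp.1] at hpU
    exact hx p.2 (antisymm hp.2 hpU ▸ hp.1)
  · intro p hp q hq hpq
    rw [f.snd_mem_image_iff (r · x) hp]
    exact trans_of r ((f.2 p hp q hq.1).2 hpq) hq.2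
  · intro p hp q hq hqp
    rw [f.snd_mem_image_iff (r x ·) hp]
    exact trans_of r hq.2 ((f.2 q hq.1 p hp).2 hqp)
  · intro p hp q hq
    refine ⟨(f.2 p hp.1 q hq.1).1 (trans_of r hp.2 hq.2), fun he => ?_⟩
    have hpq := f.fst_eq_of_snd_eq hp.1 hq.1 he
    exact hx p.2 (antisymm hp.2 (hpq ▸ hq.2) ▸ hp.1)

theorem exists_across (hs : ExtProp s) (f : FinPartialIso r s) (x : α) :
    ∃ y, ∀ p ∈ f.1, (r p.1 x ↔ s p.2 y) ∧ (r x p.1 ↔ s y p.2) := by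
  by_cases hx : ∃ y, (x, y) ∈ f.1
  · obtain ⟨y, hy⟩ := hx
    exact ⟨y, fun p hp => ⟨f.2 p hp _ hy, f.2 _ hy p hp⟩⟩
  push Not at hx
  obtain ⟨y, hyQ, hyD, hyU, hyI⟩ := (extProp_iff s).1 hs _ _ _ (f.isExtensionType_image hx)
  refine ⟨y, fun p hp => ?_⟩
  have hD := f.snd_mem_image_iff (r · x) hp
  have hU := f.snd_mem_image_iff (r x ·) hp
  have hyp : y ≠ p.2 := fun h => hyQ ⟨p, hp, h.symm⟩
  have hI := hyI p.2 ⟨p, hp, rfl⟩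
  rw [hD, hU] at hI
  refine ⟨⟨fun h => (hyD _ (hD.2 h)).1, fun h => ?_⟩, ⟨fun h => (hyU _ (hU.2 h)).1, fun h => ?_⟩⟩
  · by_contra hn
    by_cases hxp : r x p.1
    · exact hyp (antisymm (hyU _ (hU.2 hxp)).1 h)
    · exact (hI hn hxp).2 h
  · by_contra hn
    by_cases hpx : r p.1 x
    · exact hyp (antisymm h (hyD _ (hD.2 hpx)).1)
    · exact (hI hpx hn).1 h

theorem exists_across_swap (hr : ExtProp r) (f : FinPartialIso r s) (y : β) :
    ∃ x, ∀ p ∈ f.1, (r p.1 x ↔ s p.2 y) ∧ (r x p.1 ↔ s y p.2) := by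
  obtain ⟨x, hx⟩ := f.swap.exists_across hr y
  refine ⟨x, fun p hp => ?_⟩
  have := hx p.swap (Finset.mem_map_of_mem _ hp)
  exact ⟨this.1.symm, this.2.symm⟩

theorem isCofinal_definedAt (hs : ExtProp s) (x : α) :
    IsCofinal {f : FinPartialIso r s | ∃ y, (x, y) ∈ f.1} := fun f =>
  have ⟨y, hy⟩ := f.exists_across hs x
  ⟨f.insert x y hy, ⟨y, f.mem_insert hy⟩, f.le_insert hy⟩

theorem isCofinal_definedAt_swap (hr : ExtProp r) (y : β) :
    IsCofinal {f : FinPartialIso r s | ∃ x, (x, y) ∈ f.1} := fun f =>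
  have ⟨x, hx⟩ := f.exists_across_swap hr y
  ⟨f.insert x y hx, ⟨x, f.mem_insert hx⟩, f.le_insert hx⟩

end FinPartialIso

theorem nonempty_relIso_of_extProp [IsPartialOrder α r] [IsPartialOrder β s] [Countable α]
    [Countable β] (hr : ExtProp r) (hs : ExtProp s) : Nonempty (r ≃r s) := by
  cases nonempty_encodable α
  cases nonempty_encodable β
  let definedAt : α ⊕ β → Order.Cofinal (FinPartialIso r s) := Sum.elim
    (fun x => ⟨_, FinPartialIso.isCofinal_definedAt hs x⟩)
    (fun y => ⟨_, FinPartialIso.isCofinal_definedAt_swap hr y⟩)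
  let I := Order.idealOfCofinals ⟨∅, by simp⟩ definedAt
  refine nonempty_relIso_of_graph {p | ∃ f ∈ I, p ∈ f.1} ?_ (fun x => ?_) (fun y => ?_)
  · rintro p ⟨f, hf, hp⟩ q ⟨g, hg, hq⟩
    obtain ⟨h, -, hfh, hgh⟩ := I.directed f hf g hg
    exact h.2 p (hfh hp) q (hgh hq)
  · obtain ⟨f, ⟨y, hy⟩, hf⟩ := Order.cofinal_meets_idealOfCofinals _ definedAt (.inl x)
    exact ⟨y, f, hf, hy⟩
  · obtain ⟨f, ⟨x, hx⟩, hf⟩ := Order.cofinal_meets_idealOfCofinals _ definedAt (.inr y)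
    exact ⟨x, f, hf, hx⟩

end BackAndForth

theorem isPartialOrder_rot {α : Type*} {r : α → α → Prop} [IsPartialOrder α r] {A C : Set α}
    (h : RotOK r A C) : IsPartialOrder α (Rot r A C) := by
  obtain ⟨hdisj, hA, hC, hAC⟩ := h
  rw [Set.disjoint_left] at hdisj
  unfold IsDownset at hA
  unfold IsUpset at hC
  have hrefl : ∀ x, r x x := refl_of r
  have htrans : ∀ {x y z}, r x y → r y z → r x z := trans_of r
  have hanti : ∀ {x y}, r x y → r y x → x = y := antisymm
  refine { refl := ?_, trans := ?_, antisymm := ?_ } <;> unfold Rot Incomp <;> grind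

section RotAt

variable {le : P → P → Prop} {a : P}

def rotAt (le : P → P → Prop) (a : P) : {x // x ≠ a} → {x // x ≠ a} → Prop :=
  Rot (fun x y => le x.1 y.1) {x | le x.1 a} {x | le a x.1}

theorem rotAt_iff {x y : {x // x ≠ a}} : rotAt le a x y ↔
    ((le x.1 a ∧ le y.1 a ∨ (¬le x.1 a ∧ ¬le a x.1 ∧ ¬le y.1 a ∧ ¬le a y.1) ∨ le a x.1 ∧ le a y.1) ∧
      le x.1 y.1) ∨
    (¬le x.1 a ∧ ¬le a x.1 ∧ le y.1 a ∧ ¬le x.1 y.1 ∧ ¬le y.1 x.1) ∨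
    (le a x.1 ∧ le y.1 a) ∨
    (le a x.1 ∧ ¬le y.1 a ∧ ¬le a y.1 ∧ ¬le x.1 y.1 ∧ ¬le y.1 x.1) := Iff.rfl

theorem rotAt_swap : rotAt (Function.swap le) a = Function.swap (rotAt le a) := by
  ext x y
  simp only [rotAt_iff, Function.swap]
  tauto

theorem self_notMem_image_val (S : Set {x // x ≠ a}) : a ∉ Subtype.val '' S :=
  fun ⟨x, _, hx⟩ => x.2 hx

theorem ExtProp.exists_ne_realizes (hext : ExtProp le) {Q D U : Set P}
    (h : IsExtensionType le Q D U) (ha : a ∈ Q) : ∃ s : {x // x ≠ a}, Realizes le Q D U s.1 := by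
  obtain ⟨s, hs⟩ := (extProp_iff le).1 hext Q D U h
  exact ⟨⟨s, fun hsa => hs.1 (hsa ▸ ha)⟩, hs⟩

variable [IsPartialOrder P le]

instance : IsPartialOrder {x // x ≠ a} (rotAt le a) := by
  have : IsPartialOrder {x // x ≠ a} (fun x y => le x.1 y.1) :=
    (RelEmbedding.preimage (Function.Embedding.subtype _) le).isPartialOrder
  refine isPartialOrder_rot ⟨Set.disjoint_left.2 fun x hxa hax => x.2 (antisymm hxa hax),
    fun x hx y hy => trans_of le hy hx, fun x hx y hy => trans_of le hx hy,
    fun x hx y hy => ⟨trans_of le hx hy, by rintro rfl; exact x.2 (antisymm hx hy)⟩⟩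

theorem exists_realizes_rotAt_of_below (hext : ExtProp le) {Q D U : Set {x // x ≠ a}}
    (h : IsExtensionType (rotAt le a) Q D U) {d₀} (hd₀ : d₀ ∈ D) (hd₀a : le d₀.1 a) :
    ∃ s, Realizes (rotAt le a) Q D U s := by
  obtain ⟨hQ, hDQ, hUQ, hDU, hclD, hclU, hlt⟩ := h
  have htr : ∀ {x y z : P}, le x y → le y z → le x z := trans_of le
  have hanti : ∀ {x y : P}, le x y → le y x → x = y := antisymm
  rw [Set.disjoint_left] at hDU
  simp only [rotAt_iff] at hclD hclU hlt
  have hUA : ∀ u ∈ U, le u.1 a := by grind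
  have hCD : ∀ x ∈ Q, le a x.1 → x ∈ D := by grind
  -- The new point goes below `a`, hence below all of `C`; towards `B` the rotation swaps
  -- comparability and incomparability, so it goes below the points of `B` outside `D`.
  set Q' : Set P := insert a (Subtype.val '' Q)
  set D' : Set P := Subtype.val '' {x ∈ D | le x.1 a}
  set U' : Set P := insert a (Subtype.val '' {x ∈ Q | x ∈ U ∨ le a x.1 ∨ (¬ le x.1 a ∧ x ∉ D)})
  have hT : IsExtensionType le Q' D' U' := by
    refine ⟨(hQ.image _).insert a, ?_, ?_, ?_, ?_, ?_, ?_⟩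
    all_goals
      simp only [Set.subset_def, Set.disjoint_left, Set.forall_mem_insert, Set.forall_mem_image,
        Q', D', U']
      simp only [Set.mem_insert_iff, Subtype.val_injective.mem_set_image, self_notMem_image_val,
        or_false, Set.mem_ofPred_eq]
    all_goals grind
  obtain ⟨s, hsQ, hsD, hsU, hsI⟩ := hext.exists_ne_realizes hT (Set.mem_insert a _)
  simp only [Set.forall_mem_insert, Set.forall_mem_image, Q', D', U'] at hsQ hsD hsU hsI
  simp only [Set.mem_insert_iff, Subtype.val_injective.mem_set_image, self_notMem_image_val,
    or_false, Set.mem_ofPred_eq, Incomp] at hsQ hsD hsU hsI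
  refine ⟨s, ?_, fun d hd => ?_, fun u hu => ?_, fun x hx hxD hxU => ?_⟩
  all_goals simp only [rotAt_iff, Incomp, ne_eq, Subtype.ext_iff]
  all_goals grind

theorem exists_realizes_rotAt_of_incomp (hext : ExtProp le) {Q D U : Set {x // x ≠ a}}
    (h : IsExtensionType (rotAt le a) Q D U) (hDA : ∀ d ∈ D, ¬ le d.1 a)
    (hUC : ∀ u ∈ U, ¬ le a u.1) :
    ∃ s, Realizes (rotAt le a) Q D U s := by
  obtain ⟨hQ, hDQ, hUQ, hDU, hclD, hclU, hlt⟩ := h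
  have htr : ∀ {x y z : P}, le x y → le y z → le x z := trans_of le
  have hanti : ∀ {x y : P}, le x y → le y x → x = y := antisymm
  rw [Set.disjoint_left] at hDU
  simp only [rotAt_iff] at hclD hclU hlt
  -- The new point is incomparable to `a`; towards `A` and `C` the rotation swaps comparability
  -- and incomparability.
  set Q' : Set P := insert a (Subtype.val '' Q)
  set D' : Set P := Subtype.val '' {x ∈ Q | (x ∈ D ∧ ¬ le a x.1) ∨ (le x.1 a ∧ x ∉ U)}
  set U' : Set P := Subtype.val '' {x ∈ Q | (x ∈ U ∧ ¬ le x.1 a) ∨ (le a x.1 ∧ x ∉ D)}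
  have hT : IsExtensionType le Q' D' U' := by
    refine ⟨(hQ.image _).insert a, ?_, ?_, ?_, ?_, ?_, ?_⟩
    all_goals
      simp only [Set.subset_def, Set.disjoint_left, Set.forall_mem_insert, Set.forall_mem_image,
        Q', D', U']
      simp only [Set.mem_insert_iff, Subtype.val_injective.mem_set_image, self_notMem_image_val,
        Set.mem_ofPred_eq]
    all_goals grind
  obtain ⟨s, hsQ, hsD, hsU, hsI⟩ := hext.exists_ne_realizes hT (Set.mem_insert a _)
  simp only [Set.forall_mem_insert, Set.forall_mem_image, Q', D', U'] at hsQ hsD hsU hsI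
  simp only [Set.mem_insert_iff, Subtype.val_injective.mem_set_image, self_notMem_image_val,
    Set.mem_ofPred_eq, Incomp] at hsQ hsD hsU hsI
  refine ⟨s, ?_, fun d hd => ?_, fun u hu => ?_, fun x hx hxD hxU => ?_⟩
  all_goals simp only [rotAt_iff, Incomp, ne_eq, Subtype.ext_iff]
  all_goals grind

theorem extProp_rotAt (hext : ExtProp le) : ExtProp (rotAt le a) := by
  refine (extProp_iff _).2 fun Q D U h => ?_
  by_cases hA : ∃ d ∈ D, le d.1 a
  · obtain ⟨d₀, hd₀, hd₀a⟩ := hA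
    exact exists_realizes_rotAt_of_below hext h hd₀ hd₀a
  by_cases hC : ∃ u ∈ U, le a u.1
  · obtain ⟨u₀, hu₀, hu₀a⟩ := hC
    have h' := h.swap
    rw [← rotAt_swap] at h'
    obtain ⟨s, hs⟩ := exists_realizes_rotAt_of_below hext.swap h' hu₀ hu₀a
    rw [rotAt_swap] at hs
    exact ⟨s, hs.swap⟩
  push Not at hA hC
  exact exists_realizes_rotAt_of_incomp hext h hA hC

end RotAt

theorem stmt16 [Countable P] (le : P → P → Prop) [IsPartialOrder P le]
    (hext : ExtProp le) (a : P)
    (le' : {x : P // x ≠ a} → {x : P // x ≠ a} → Prop)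
    (hle' : le' = fun x y => le x.1 y.1)
    (A C : Set {x : P // x ≠ a})
    (hA : A = {x | le x.1 a}) (hC : C = {x | le a x.1}) :
    ExtProp (Rot le' A C) ∧
    ∃ e : {x : P // x ≠ a} ≃ P, ∀ x y, Rot le' A C x y ↔ le (e x) (e y) := by
  subst hle' hA hC
  have hrot : ExtProp (rotAt le a) := extProp_rotAt hext
  obtain ⟨e⟩ := nonempty_relIso_of_extProp hrot hext
  exact ⟨hrot, e.toEquiv, fun x y => e.map_rel_iff.symm⟩
end

section
/- For (ℚ,≤) with the downset A = {q : q < 0} and the upset C = {q : q ≥ 0} (so A < C, A ∪ C = ℚ, both nonempty, and A has no maximum), the rotation R_{A,C}(ℚ,≤) is a linear order on ℚ, distinct from ≤, with no maximal elements, i.e. with the same (empty) set of maximal elements as (ℚ,≤); hence the finite-poset theorem 'equal maximal elements plus rotation-equivalence implies equality' fails for infinite posets. -/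
universe u

variable {P : Type u}

set_option maxHeartbeats 1000000 in
private lemma rot_iff (x y : ℚ) :
    Rot (fun x y : ℚ => x ≤ y) {q | q < 0} {q | 0 ≤ q} x y ↔
      ((x < 0 ∧ y < 0 ∧ x ≤ y) ∨ (0 ≤ x ∧ 0 ≤ y ∧ x ≤ y) ∨ (0 ≤ x ∧ y < 0)) := by
  unfold Rot Incomp
  simp only [Set.mem_setOf_eq]
  constructor
  · rintro (⟨(⟨h1,h2⟩|⟨h1,h2,h3,h4⟩|⟨h1,h2⟩),h⟩|⟨h1,h2,_⟩|⟨h1,h2⟩|⟨h1,h2,h3,_⟩) <;>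
      first
      | exact Or.inl ⟨h1, h2, h⟩
      | exact Or.inr (Or.inl ⟨h1, h2, h⟩)
      | exact Or.inr (Or.inr ⟨h1, h2⟩)
      | linarith
  · rintro (⟨h1,h2,h⟩|⟨h1,h2,h⟩|⟨h1,h2⟩)
    · exact Or.inl ⟨Or.inl ⟨h1, h2⟩, h⟩
    · exact Or.inl ⟨Or.inr (Or.inr ⟨h1, h2⟩), h⟩
    · exact Or.inr (Or.inr (Or.inl ⟨h1, h2⟩))


set_option maxHeartbeats 1000000 in
theorem stmt18 :
    RotOK (fun x y : ℚ => x ≤ y) {q | q < 0} {q | 0 ≤ q} ∧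
    IsLinearOrder ℚ (Rot (fun x y : ℚ => x ≤ y) {q | q < 0} {q | 0 ≤ q}) ∧
    maxSet (Rot (fun x y : ℚ => x ≤ y) {q | q < 0} {q | 0 ≤ q}) = ∅ ∧
    maxSet (fun x y : ℚ => x ≤ y) = ∅ ∧
    Rot (fun x y : ℚ => x ≤ y) {q | q < 0} {q | 0 ≤ q} ≠ fun x y : ℚ => x ≤ y := by
  refine ⟨⟨?_, ?_, ?_, ?_⟩, ?_, ?_, ?_, ?_⟩
  · rw [Set.disjoint_left]; intro q hq hq'; simp only [Set.mem_setOf_eq] at *; linarith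
  · intro x hx y hyx; simp only [Set.mem_setOf_eq] at *; linarith
  · intro x hx y hxy; simp only [Set.mem_setOf_eq] at *; linarith
  · intro a ha c hc; simp only [Set.mem_setOf_eq] at *
    exact ⟨le_of_lt (lt_of_lt_of_le ha hc), ne_of_lt (lt_of_lt_of_le ha hc)⟩
  · refine { refl := ?_, trans := ?_, antisymm := ?_, total := ?_ }
    · intro a
      rw [rot_iff]
      rcases lt_or_ge a 0 with h | h
      · exact Or.inl ⟨h, h, le_refl a⟩
      · exact Or.inr (Or.inl ⟨h, h, le_refl a⟩)
    · intro a b c hab hbc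
      rw [rot_iff] at *
      rcases hab with ⟨_,_,_⟩|⟨_,_,_⟩|⟨_,_⟩ <;> rcases hbc with ⟨_,_,_⟩|⟨_,_,_⟩|⟨_,_⟩ <;>
        first
        | (exact Or.inl ⟨by linarith, by linarith, by linarith⟩)
        | (exact Or.inr (Or.inl ⟨by linarith, by linarith, by linarith⟩))
        | (exact Or.inr (Or.inr ⟨by linarith, by linarith⟩))
        | (exfalso; linarith)
    · intro a b hab hba
      rw [rot_iff] at *
      rcases hab with ⟨_,_,_⟩|⟨_,_,_⟩|⟨_,_⟩ <;> rcases hba with ⟨_,_,_⟩|⟨_,_,_⟩|⟨_,_⟩ <;> linarith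
    · intro a b
      rw [rot_iff, rot_iff]
      rcases lt_or_ge a 0 with ha | ha <;> rcases lt_or_ge b 0 with hb | hb <;>
        rcases le_total a b with h | h <;> tauto
  · ext x
    simp only [maxSet, Set.mem_setOf_eq, Set.mem_empty_iff_false, iff_false, not_forall]
    rcases lt_or_ge x 0 with h | h
    · refine ⟨x/2, ?_, ?_⟩
      · rw [rot_iff]; exact Or.inl ⟨h, by linarith, by linarith⟩
      · intro he; linarith
    · refine ⟨-1, ?_, by intro he; rw [← he] at h; norm_num at h⟩
      rw [rot_iff]; exact Or.inr (Or.inr ⟨h, by norm_num⟩)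
  · ext x
    simp only [maxSet, Set.mem_setOf_eq, Set.mem_empty_iff_false, iff_false, not_forall]
    exact ⟨x + 1, by linarith, by intro h; linarith [h]⟩
  · intro h
    have : Rot (fun x y : ℚ => x ≤ y) {q | q < 0} {q | 0 ≤ q} 0 (-1) := by
      rw [rot_iff]; norm_num
    rw [h] at this
    norm_num at this
end

section
/- Define three ternary relations on the domain P of the random poset ℙ: O₂(a,b,c) holds iff the induced poset on {a,b,c} is a chain in one of the cyclic orientations a<b<c, b<c<a, c<a<b, or has exactly one comparability a<b, b<c, or c<a; O₃(a,b,c) iff O₂(c,b,a); and O₁ is the complement of O₂ ∪ O₃ on triples of distinct elements. Then a permutation of P preserving O₁, O₂, O₃ (and whose inverse does) yields, via transporting ≤, a poset (P,⪯) whose 3-element induced subposets are all rotation-equivalent to those of ℙ, and hence is a rotating permutation: there is a rotation R with R(ℙ) = (P,⪯). -/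
universe u

variable {P : Type u}

section RotAux

variable {P : Type u}

open Classical in
/-- Numerical encoding of the relation between a pair: `1` if `x < y`,
`2` if `y < x`, `0` otherwise. -/
noncomputable def eps (le : P → P → Prop) (x y : P) : ZMod 3 :=
  if SLT le x y then 1 else if SLT le y x then 2 else 0

lemma eps_of_slt {le : P → P → Prop} {x y : P} (h : SLT le x y) : eps le x y = 1 := by
  rw [eps, if_pos h]

lemma eps_of_gt {le : P → P → Prop} (ha : ∀ u w, le u w → le w u → u = w)
    {x y : P} (h : SLT le y x) : eps le x y = 2 := by
  have hn : ¬ SLT le x y := fun h' => h'.2 (ha x y h'.1 h.1)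
  rw [eps, if_neg hn, if_pos h]

lemma eps_of_incomp {le : P → P → Prop} {x y : P} (h : Incomp le x y) : eps le x y = 0 := by
  rw [eps, if_neg (fun h' => h.1 h'.1), if_neg (fun h' => h.2 h'.1)]

lemma eps_self {le : P → P → Prop} (x : P) : eps le x x = 0 := by
  rw [eps, if_neg (fun h' => h'.2 rfl), if_neg (fun h' => h'.2 rfl)]

lemma slt_of_eps_one {le : P → P → Prop} {x y : P} (h : eps le x y = 1) : SLT le x y := by
  rw [eps] at h
  split_ifs at h with h1 h2
  · exact h1
  · exact absurd h (by decide)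
  · exact absurd h (by decide)

lemma slt_of_eps_two {le : P → P → Prop} {x y : P} (h : eps le x y = 2) : SLT le y x := by
  rw [eps] at h
  split_ifs at h with h1 h2
  · exact absurd h (by decide)
  · exact h2
  · exact absurd h (by decide)

lemma incomp_of_eps_zero {le : P → P → Prop} {x y : P} (hne : x ≠ y)
    (h : eps le x y = 0) : Incomp le x y := by
  rw [eps] at h
  split_ifs at h with h1 h2
  · exact absurd h (by decide)
  · exact absurd h (by decide)
  · exact ⟨fun hl => h1 ⟨hl, hne⟩, fun hl => h2 ⟨hl, hne.symm⟩⟩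

lemma tri {le : P → P → Prop} {x y : P} (hne : x ≠ y) :
    SLT le x y ∨ SLT le y x ∨ Incomp le x y := by
  by_cases h1 : le x y
  · exact Or.inl ⟨h1, hne⟩
  by_cases h2 : le y x
  · exact Or.inr (Or.inl ⟨h2, hne.symm⟩)
  · exact Or.inr (Or.inr ⟨h1, h2⟩)

lemma eps_comm {le : P → P → Prop} (ha : ∀ u w, le u w → le w u → u = w)
    (x y : P) : eps le y x = - eps le x y := by
  by_cases hxy : x = y
  · subst hxy; rw [eps_self]; ring
  rcases tri (le := le) hxy with h | h | h
  · rw [eps_of_slt h, eps_of_gt ha h]; decide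
  · rw [eps_of_gt ha h, eps_of_slt h]; decide
  · rw [eps_of_incomp h, eps_of_incomp ⟨h.2, h.1⟩]; decide

lemma zmod3_cmp : ∀ a b : ZMod 3, (a = 1 ↔ b = 1) → (a = 2 ↔ b = 2) → a = b := by decide

lemma zmod3_neg2 : ∀ a b : ZMod 3, ((-a = 1) ↔ (-b = 1)) → (a = 2 ↔ b = 2) := by decide

lemma o2_iff {le : P → P → Prop} (ht : ∀ a b c : P, le a b → le b c → le a c)
    (ha : ∀ u w, le u w → le w u → u = w) {x y z : P}
    (hxy : x ≠ y) (hyz : y ≠ z) (hxz : x ≠ z) :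
    O2rel le x y z ↔ eps le x y + eps le y z + eps le z x = 1 := by
  constructor
  · rintro (⟨h1, h2⟩ | ⟨h1, h2⟩ | ⟨h1, h2⟩ | ⟨h1, h2, h3⟩ | ⟨h1, h2, h3⟩ | ⟨h1, h2, h3⟩)
    · rw [eps_of_slt h1, eps_of_slt h2, eps_of_gt ha ⟨ht _ _ _ h1.1 h2.1, hxz⟩]; decide
    · rw [eps_of_gt ha ⟨ht _ _ _ h1.1 h2.1, hxy.symm⟩, eps_of_slt h1, eps_of_slt h2]; decide
    · rw [eps_of_slt h2, eps_of_gt ha ⟨ht _ _ _ h1.1 h2.1, hyz.symm⟩, eps_of_slt h1]; decide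
    · rw [eps_of_slt h1, eps_of_incomp h3, eps_of_incomp ⟨h2.2, h2.1⟩]; decide
    · rw [eps_of_incomp ⟨h2.2, h2.1⟩, eps_of_slt h1, eps_of_incomp h3]; decide
    · rw [eps_of_incomp h3, eps_of_incomp ⟨h2.2, h2.1⟩, eps_of_slt h1]; decide
  · intro h
    rcases tri (le := le) hxy with h1 | h1 | h1 <;>
      rcases tri (le := le) hyz with h2 | h2 | h2 <;>
        rcases tri (le := le) hxz.symm with h3 | h3 | h3
    -- h1 : x?y, h2 : y?z, h3 : pair (z,x)
    · -- x<y, y<z, z<x : cycle, also numeric kill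
      rw [eps_of_slt h1, eps_of_slt h2, eps_of_slt h3] at h; exact absurd h (by decide)
    · -- x<y, y<z, x<z : chain
      exact Or.inl ⟨h1, h2⟩
    · -- x<y, y<z, x∥z : impossible by transitivity
      exact absurd (ht _ _ _ h1.1 h2.1) h3.2
    · -- x<y, z<y, z<x
      exact Or.inr (Or.inr (Or.inl ⟨h3, h1⟩))
    · -- x<y, z<y, x<z : numeric kill (1+2+2=2)
      rw [eps_of_slt h1, eps_of_gt ha h2, eps_of_gt ha ⟨h3.1, hxz⟩] at h
      exact absurd h (by decide)
    · -- x<y, z<y, x∥z : numeric kill (1+2+0=0)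
      rw [eps_of_slt h1, eps_of_gt ha h2, eps_of_incomp h3] at h
      exact absurd h (by decide)
    · -- x<y, y∥z, z<x : le z x, le x y → le z y contra
      exact absurd (ht _ _ _ h3.1 h1.1) h2.2
    · -- x<y, y∥z, x<z : numeric kill (1+0+2=0)
      rw [eps_of_slt h1, eps_of_incomp h2, eps_of_gt ha ⟨h3.1, hxz⟩] at h
      exact absurd h (by decide)
    · -- x<y, y∥z, x∥z : single x<y
      exact Or.inr (Or.inr (Or.inr (Or.inl ⟨h1, ⟨h3.2, h3.1⟩, h2⟩)))
    · -- y<x, y<z, z<x : chain y<z<x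
      exact Or.inr (Or.inl ⟨h2, h3⟩)
    · -- y<x, y<z, x<z : numeric kill (2+1+2=2)
      rw [eps_of_gt ha h1, eps_of_slt h2, eps_of_gt ha ⟨h3.1, hxz⟩] at h
      exact absurd h (by decide)
    · -- y<x, y<z, x∥z : numeric kill (2+1+0=0)
      rw [eps_of_gt ha h1, eps_of_slt h2, eps_of_incomp h3] at h
      exact absurd h (by decide)
    · -- y<x, z<y, z<x : numeric kill (2+2+1=2)
      rw [eps_of_gt ha h1, eps_of_gt ha h2, eps_of_slt h3] at h
      exact absurd h (by decide)
    · -- y<x, z<y, x<z : cycle: le x z, le z y → le x y contra y<x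
      exact absurd (ha x y (ht _ _ _ h3.1 h2.1) h1.1) hxy
    · -- y<x, z<y, x∥z : le z y, le y x → le z x contra
      exact absurd (ht _ _ _ h2.1 h1.1) h3.1
    · -- y<x, y∥z, z<x : numeric kill (2+0+1=0)
      rw [eps_of_gt ha h1, eps_of_incomp h2, eps_of_slt h3] at h
      exact absurd h (by decide)
    · -- y<x, y∥z, x<z : le y x, le x z → le y z contra
      exact absurd (ht _ _ _ h1.1 h3.1) h2.1
    · -- y<x, y∥z, x∥z : numeric kill (2+0+0=2)
      rw [eps_of_gt ha h1, eps_of_incomp h2, eps_of_incomp h3] at h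
      exact absurd h (by decide)
    · -- x∥y, y<z, z<x : le y z, le z x → le y x contra
      exact absurd (ht _ _ _ h2.1 h3.1) h1.2
    · -- x∥y, y<z, x<z : numeric kill (0+1+2=0)
      rw [eps_of_incomp h1, eps_of_slt h2, eps_of_gt ha ⟨h3.1, hxz⟩] at h
      exact absurd h (by decide)
    · -- x∥y, y<z, x∥z : single y<z
      exact Or.inr (Or.inr (Or.inr (Or.inr (Or.inl ⟨h2, ⟨h1.2, h1.1⟩, ⟨h3.1, h3.2⟩⟩))))
    · -- x∥y, z<y, z<x : numeric kill (0+2+1=0)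
      rw [eps_of_incomp h1, eps_of_gt ha h2, eps_of_slt h3] at h
      exact absurd h (by decide)
    · -- x∥y, z<y, x<z : le x z, le z y → le x y contra
      exact absurd (ht _ _ _ h3.1 h2.1) h1.1
    · -- x∥y, z<y, x∥z : numeric kill (0+2+0=2)
      rw [eps_of_incomp h1, eps_of_gt ha h2, eps_of_incomp h3] at h
      exact absurd h (by decide)
    · -- x∥y, y∥z, z<x : single z<x
      exact Or.inr (Or.inr (Or.inr (Or.inr (Or.inr ⟨h3, ⟨h2.2, h2.1⟩, h1⟩))))
    · -- x∥y, y∥z, x<z : numeric kill (0+0+2=2)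
      rw [eps_of_incomp h1, eps_of_incomp h2, eps_of_gt ha ⟨h3.1, hxz⟩] at h
      exact absurd h (by decide)
    · -- x∥y, y∥z, x∥z : antichain, numeric kill (0)
      rw [eps_of_incomp h1, eps_of_incomp h2, eps_of_incomp h3] at h
      exact absurd h (by decide)

lemma rotstep_restrict {le le' : P → P → Prop} {A C : Set P}
    (hOK : RotOK le A C) (hRot : Rot le A C = le') (S : Set P) :
    RotStep (restrictRel le S) (restrictRel le' S) := by
  refine ⟨{x : S | x.1 ∈ A}, {x : S | x.1 ∈ C}, ⟨?_, ?_, ?_, ?_⟩, ?_⟩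
  · rw [Set.disjoint_left]
    intro x hx hx'
    exact Set.disjoint_left.mp hOK.1 hx hx'
  · intro x hx y hyx
    exact hOK.2.1 hx hyx
  · intro x hx y hxy
    exact hOK.2.2.1 hx hxy
  · intro a haA c hcC
    obtain ⟨h1, h2⟩ := hOK.2.2.2 a.1 haA c.1 hcC
    exact ⟨h1, fun hh => h2 (congrArg Subtype.val hh)⟩
  · funext x y
    rw [← hRot]
    rfl

end RotAux

lemma main_exists {P : Type u} (le le' : P → P → Prop)
    (hrefl : ∀ x : P, le x x)
    (htr : ∀ a b c : P, le a b → le b c → le a c)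
    (hanti : ∀ u w : P, le u w → le w u → u = w)
    (hext : ExtProp le)
    (hr' : ∀ x : P, le' x x)
    (ht' : ∀ a b c : P, le' a b → le' b c → le' a c)
    (ha' : ∀ u w : P, le' u w → le' w u → u = w)
    (hsum : ∀ x y z : P, x ≠ y → y ≠ z → x ≠ z →
      eps le' x y + eps le' y z + eps le' z x = eps le x y + eps le y z + eps le z x) :
    ∃ A C : Set P, RotOK le A C ∧ Rot le A C = le' := by
  rcases isEmpty_or_nonempty P with hP | hP
  · refine ⟨∅, ∅, ⟨by simp, ?_, ?_, ?_⟩, ?_⟩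
    · intro x hx; exact absurd hx (Set.notMem_empty x)
    · intro x hx; exact absurd hx (Set.notMem_empty x)
    · intro a haA; exact absurd haA (Set.notMem_empty a)
    · funext x y; exact (hP.false x).elim
  obtain ⟨p⟩ := hP
  set idx : P → ZMod 3 := fun x => eps le' x p - eps le x p with hidx
  have q1 : ∀ u : ZMod 3, u + 1 ≠ u := by decide
  have q2 : ∀ u : ZMod 3, u - 1 ≠ u := by decide
  have q3 : ∀ u : ZMod 3, u + 1 ≠ u - 1 := by decide
  have q5 : ∀ u : ZMod 3, u ≠ u + 1 := by decide
  have q6 : ∀ u : ZMod 3, u ≠ u - 1 := by decide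
  have z3cases : ∀ u w : ZMod 3, u = w ∨ u = w + 1 ∨ u = w - 1 := by decide
  have hpot : ∀ x y : P, eps le' x y = eps le x y + (idx x - idx y) := by
    intro x y
    by_cases hxy : x = y
    · subst hxy
      rw [eps_self (le := le'), eps_self (le := le)]; ring
    by_cases hxp : x = p
    · subst hxp
      simp only [hidx]
      rw [eps_comm ha' y x, eps_comm hanti y x, eps_self (le := le'), eps_self (le := le)]
      ring
    by_cases hyp : y = p
    · subst hyp
      simp only [hidx]
      rw [eps_self (le := le'), eps_self (le := le)]
      ring
    have hs := hsum x y p hxy hyp hxp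
    rw [eps_comm ha' x p, eps_comm hanti x p] at hs
    simp only [hidx]
    linear_combination hs
  by_cases hFar : ∃ a c : P, le a c ∧ a ≠ c ∧ le' c a
  · obtain ⟨a₀, c₀, hac₀, hne₀, hca₀⟩ := hFar
    have hFarIdx : ∀ a c : P, le a c → a ≠ c → le' c a → idx c = idx a - 1 := by
      intro a c h1 h2 h3
      have hp := hpot a c
      rw [eps_of_slt ⟨h1, h2⟩, eps_of_gt ha' ⟨h3, h2.symm⟩] at hp
      linear_combination hp
    have hwit : ∀ x1 x2 x3 x4 : P, ∃ s : P,
        (Incomp le s x1 ∧ s ≠ x1) ∧ (Incomp le s x2 ∧ s ≠ x2) ∧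
        (Incomp le s x3 ∧ s ≠ x3) ∧ (Incomp le s x4 ∧ s ≠ x4) := by
      intro x1 x2 x3 x4
      obtain ⟨s, hsQ, -, -, hinc⟩ :=
        hext {x1, x2, x3, x4} ((((Set.finite_singleton x4).insert x3).insert x2).insert x1)
          ∅ ∅ (Set.empty_subset _) (Set.empty_subset _) (by simp)
          (by intro x _ d hd; exact absurd hd (Set.notMem_empty d))
          (by intro x _ u hu; exact absurd hu (Set.notMem_empty u))
          (by intro d hd; exact absurd hd (Set.notMem_empty d))
      have hmem : ∀ w ∈ ({x1, x2, x3, x4} : Set P), Incomp le s w ∧ s ≠ w := by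
        intro w hw
        exact ⟨hinc w hw (Set.notMem_empty w) (Set.notMem_empty w),
          fun h => hsQ (by rw [h]; exact hw)⟩
      exact ⟨s, hmem x1 (by simp), hmem x2 (by simp), hmem x3 (by simp), hmem x4 (by simp)⟩
    have hW0 : ∀ a c s : P, le a c → a ≠ c → le' c a →
        Incomp le s a → s ≠ a → Incomp le s c → s ≠ c → idx s = idx a + 1 := by
      intro a c s h1 h2 h3 hia hna hic hnc
      have hc : idx c = idx a - 1 := hFarIdx a c h1 h2 h3
      have ea : eps le' s a = idx s - idx a := by
        rw [hpot s a, eps_of_incomp hia]; ring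
      have ec : eps le' s c = idx s - idx a + 1 := by
        rw [hpot s c, eps_of_incomp hic, hc]; ring
      rcases z3cases (idx s) (idx a) with h | h | h
      · rw [h] at ea ec
        have hsc : le' s c := (slt_of_eps_one (by rw [ec]; ring)).1
        have ea0 : eps le' s a = 0 := by rw [ea]; ring
        exact absurd (ht' _ _ _ hsc h3) (incomp_of_eps_zero hna ea0).1
      · exact h
      · rw [h] at ea ec
        have e2 : eps le' s a = 2 := by
          rw [ea]; exact (by decide : ∀ u : ZMod 3, u - 1 - u = 2) (idx a)
        have has : le' a s := (slt_of_eps_two e2).1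
        have ec0 : eps le' s c = 0 := by rw [ec]; ring
        exact absurd (ht' _ _ _ h3 has) (incomp_of_eps_zero hnc ec0).2
    have hN1 : ∀ a c : P, le a c → a ≠ c → le' c a → idx a = idx a₀ := by
      intro a c h1 h2 h3
      obtain ⟨s, hs1, hs2, hs3, hs4⟩ := hwit a c a₀ c₀
      have e1 := hW0 a c s h1 h2 h3 hs1.1 hs1.2 hs2.1 hs2.2
      have e2 := hW0 a₀ c₀ s hac₀ hne₀ hca₀ hs3.1 hs3.2 hs4.1 hs4.2
      have e3 := e1.symm.trans e2
      linear_combination e3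
    have hN2 : ∀ x y : P, idx x = idx a₀ → idx y = idx a₀ - 1 →
        le x y ∧ x ≠ y ∧ le' y x := by
      intro x y hix hiy
      have hxy : x ≠ y := by
        intro h; rw [h] at hix; rw [hix] at hiy; exact q6 (idx a₀) hiy
      obtain ⟨s, hs1, hs2, hs3, hs4⟩ := hwit x y a₀ c₀
      have hs0 : idx s = idx a₀ + 1 := hW0 a₀ c₀ s hac₀ hne₀ hca₀ hs3.1 hs3.2 hs4.1 hs4.2
      have esx : eps le' s x = 1 := by
        rw [hpot s x, eps_of_incomp hs1.1, hs0, hix]; ring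
      have esy : eps le' s y = 2 := by
        rw [hpot s y, eps_of_incomp hs2.1, hs0, hiy]
        exact (by decide : ∀ u : ZMod 3, 0 + (u + 1 - (u - 1)) = 2) (idx a₀)
      have hsx : le' s x := (slt_of_eps_one esx).1
      have hys : le' y s := (slt_of_eps_two esy).1
      have hyx : le' y x := ht' _ _ _ hys hsx
      rcases tri (le := le) hxy with h | h | h
      · refine ⟨h.1, hxy, ?_⟩
        have e := hpot x y
        rw [eps_of_slt h, hix, hiy] at e
        have e2 : eps le' x y = 2 := by
          rw [e]; exact (by decide : ∀ u : ZMod 3, 1 + (u - (u - 1)) = 2) (idx a₀)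
        exact (slt_of_eps_two e2).1
      · have e := hpot x y
        rw [eps_of_gt hanti h, hix, hiy] at e
        have e0 : eps le' x y = 0 := by
          rw [e]; exact (by decide : ∀ u : ZMod 3, 2 + (u - (u - 1)) = 0) (idx a₀)
        exact absurd hyx (incomp_of_eps_zero hxy e0).2
      · have e := hpot x y
        rw [eps_of_incomp h, hix, hiy] at e
        have e1 : eps le' x y = 1 := by rw [e]; ring
        exact absurd (ha' x y (slt_of_eps_one e1).1 hyx) hxy
    set v := idx a₀ with hv
    refine ⟨{z : P | idx z = v}, {z : P | idx z = v - 1}, ⟨?_, ?_, ?_, ?_⟩, ?_⟩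
    · rw [Set.disjoint_left]
      intro x hx hx'
      have h1 : idx x = v := hx
      have h2 : idx x = v - 1 := hx'
      rw [h1] at h2
      exact q6 v h2
    · -- downset
      intro x hx y hyx
      have hix : idx x = v := hx
      by_cases hxy : y = x
      · show idx y = v; rw [hxy]; exact hix
      rcases z3cases (idx y) v with h | h | h
      · exact h
      · exfalso
        have e := hpot y x
        rw [eps_of_slt ⟨hyx, hxy⟩, h, hix] at e
        have e2 : eps le' y x = 2 := by rw [e]; ring
        have h0 := hN1 y x hyx hxy (slt_of_eps_two e2).1
        rw [h] at h0
        exact q1 v h0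
      · exfalso
        obtain ⟨hxy', _, _⟩ := hN2 x y hix h
        exact hxy (hanti y x hyx hxy')
    · -- upset
      intro x hx y hxy'
      have hix : idx x = v - 1 := hx
      by_cases hxy : y = x
      · show idx y = v - 1; rw [hxy]; exact hix
      rcases z3cases (idx y) (v - 1) with h | h | h
      · exact h
      · exfalso
        obtain ⟨hyx', _, _⟩ := hN2 y x (by rw [h]; ring) hix
        exact hxy (hanti y x hyx' hxy')
      · exfalso
        have hnxy : x ≠ y := fun hh => hxy hh.symm
        have e := hpot x y
        rw [eps_of_slt ⟨hxy', hnxy⟩, hix, h] at e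
        have e2 : eps le' x y = 2 := by rw [e]; ring
        have h0 := hN1 x y hxy' hnxy (slt_of_eps_two e2).1
        rw [hix] at h0
        exact q2 v h0
    · intro a haA c hcC
      obtain ⟨h1, h2, _⟩ := hN2 a c haA hcC
      exact ⟨h1, h2⟩
    · funext x y
      apply propext
      constructor
      · rintro (⟨hb, hl⟩ | ⟨hxA, hxC, hyA, hinc⟩ | ⟨hxC, hyA⟩ | ⟨hxC, hyA, hyC, hinc⟩)
        · -- same block
          have hsameidx : idx x = idx y := by
            rcases hb with ⟨h1', h2'⟩ | ⟨h1', h2', h3', h4'⟩ | ⟨h1', h2'⟩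
            · exact (show idx x = v from h1').trans (show idx y = v from h2').symm
            · have e1 : idx x = v + 1 := by
                rcases z3cases (idx x) v with h | h | h
                · exact absurd h h1'
                · exact h
                · exact absurd h h2'
              have e2 : idx y = v + 1 := by
                rcases z3cases (idx y) v with h | h | h
                · exact absurd h h3'
                · exact h
                · exact absurd h h4'
              rw [e1, e2]
            · exact (show idx x = v - 1 from h1').trans (show idx y = v - 1 from h2').symm
          by_cases hxy : x = y
          · subst hxy; exact hr' x
          have e := hpot x y
          rw [eps_of_slt ⟨hl, hxy⟩, hsameidx] at e
          have e1 : eps le' x y = 1 := by rw [e]; ring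
          exact (slt_of_eps_one e1).1
        · -- x in B, y in A, incomparable
          have hix : idx x = v + 1 := by
            rcases z3cases (idx x) v with h | h | h
            · exact absurd h hxA
            · exact h
            · exact absurd h hxC
          have hiy : idx y = v := hyA
          have e := hpot x y
          rw [eps_of_incomp hinc, hix, hiy] at e
          have e1 : eps le' x y = 1 := by rw [e]; ring
          exact (slt_of_eps_one e1).1
        · -- x in C, y in A
          obtain ⟨-, -, h3'⟩ := hN2 y x hyA hxC
          exact h3'
        · -- x in C, y in B, incomparable
          have hiy : idx y = v + 1 := by
            rcases z3cases (idx y) v with h | h | h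
            · exact absurd h hyA
            · exact h
            · exact absurd h hyC
          have hix : idx x = v - 1 := hxC
          have e := hpot x y
          rw [eps_of_incomp hinc, hix, hiy] at e
          have e1 : eps le' x y = 1 := by
            rw [e]; exact (by decide : ∀ u : ZMod 3, 0 + (u - 1 - (u + 1)) = 1) v
          exact (slt_of_eps_one e1).1
      · intro hl'
        by_cases hxy : x = y
        · subst hxy
          rcases z3cases (idx x) v with h | h | h
          · exact Or.inl ⟨Or.inl ⟨h, h⟩, hrefl x⟩
          · exact Or.inl ⟨Or.inr (Or.inl ⟨fun hm => q1 v (h.symm.trans hm),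
              fun hm => q3 v (h.symm.trans hm), fun hm => q1 v (h.symm.trans hm),
              fun hm => q3 v (h.symm.trans hm)⟩), hrefl x⟩
          · exact Or.inl ⟨Or.inr (Or.inr ⟨h, h⟩), hrefl x⟩
        rcases z3cases (idx x) v with hx' | hx' | hx' <;>
          rcases z3cases (idx y) v with hy' | hy' | hy'
        · -- (A, A)
          have e := hpot x y
          rw [eps_of_slt ⟨hl', hxy⟩, hx', hy'] at e
          have e1 : eps le x y = 1 := by linear_combination - e
          exact Or.inl ⟨Or.inl ⟨hx', hy'⟩, (slt_of_eps_one e1).1⟩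
        · -- (A, B) : impossible
          rcases tri (le := le) hxy with h | h | h
          · have e := hpot x y
            rw [eps_of_slt ⟨hl', hxy⟩, eps_of_slt h, hx', hy'] at e
            exact absurd e ((by decide : ∀ u : ZMod 3, (1 : ZMod 3) ≠ 1 + (u - (u + 1))) v)
          · have h0 := hN1 y x h.1 h.2 hl'
            rw [hy'] at h0
            exact absurd h0 (q1 v)
          · have e := hpot x y
            rw [eps_of_slt ⟨hl', hxy⟩, eps_of_incomp h, hx', hy'] at e
            exact absurd e ((by decide : ∀ u : ZMod 3, (1 : ZMod 3) ≠ 0 + (u - (u + 1))) v)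
        · -- (A, C) : impossible
          obtain ⟨-, -, h3'⟩ := hN2 x y hx' hy'
          exact absurd (ha' x y hl' h3') hxy
        · -- (B, A)
          rcases tri (le := le) hxy with h | h | h
          · have e := hpot x y
            rw [eps_of_slt ⟨hl', hxy⟩, eps_of_slt h, hx', hy'] at e
            exact absurd e ((by decide : ∀ u : ZMod 3, (1 : ZMod 3) ≠ 1 + (u + 1 - u)) v)
          · have e := hpot x y
            rw [eps_of_slt ⟨hl', hxy⟩, eps_of_gt hanti h, hx', hy'] at e
            exact absurd e ((by decide : ∀ u : ZMod 3, (1 : ZMod 3) ≠ 2 + (u + 1 - u)) v)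
          · exact Or.inr (Or.inl ⟨fun hm => q1 v (hx'.symm.trans hm),
              fun hm => q3 v (hx'.symm.trans hm), hy', h⟩)
        · -- (B, B)
          have e := hpot x y
          rw [eps_of_slt ⟨hl', hxy⟩, hx', hy'] at e
          have e1 : eps le x y = 1 := by linear_combination - e
          exact Or.inl ⟨Or.inr (Or.inl ⟨fun hm => q1 v (hx'.symm.trans hm),
            fun hm => q3 v (hx'.symm.trans hm), fun hm => q1 v (hy'.symm.trans hm),
            fun hm => q3 v (hy'.symm.trans hm)⟩), (slt_of_eps_one e1).1⟩
        · -- (B, C) : impossible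
          rcases tri (le := le) hxy with h | h | h
          · have e := hpot x y
            rw [eps_of_slt ⟨hl', hxy⟩, eps_of_slt h, hx', hy'] at e
            exact absurd e ((by decide : ∀ u : ZMod 3, (1 : ZMod 3) ≠ 1 + (u + 1 - (u - 1))) v)
          · have h0 := hN1 y x h.1 h.2 hl'
            rw [hy'] at h0
            exact absurd h0 (q2 v)
          · have e := hpot x y
            rw [eps_of_slt ⟨hl', hxy⟩, eps_of_incomp h, hx', hy'] at e
            exact absurd e ((by decide : ∀ u : ZMod 3, (1 : ZMod 3) ≠ 0 + (u + 1 - (u - 1))) v)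
        · -- (C, A)
          exact Or.inr (Or.inr (Or.inl ⟨hx', hy'⟩))
        · -- (C, B)
          rcases tri (le := le) hxy with h | h | h
          · have e := hpot x y
            rw [eps_of_slt ⟨hl', hxy⟩, eps_of_slt h, hx', hy'] at e
            exact absurd e ((by decide : ∀ u : ZMod 3, (1 : ZMod 3) ≠ 1 + (u - 1 - (u + 1))) v)
          · have e := hpot x y
            rw [eps_of_slt ⟨hl', hxy⟩, eps_of_gt hanti h, hx', hy'] at e
            exact absurd e ((by decide : ∀ u : ZMod 3, (1 : ZMod 3) ≠ 2 + (u - 1 - (u + 1))) v)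
          · exact Or.inr (Or.inr (Or.inr ⟨hx', fun hm => q1 v (hy'.symm.trans hm),
              fun hm => q3 v (hy'.symm.trans hm), h⟩))
        · -- (C, C)
          have e := hpot x y
          rw [eps_of_slt ⟨hl', hxy⟩, hx', hy'] at e
          have e1 : eps le x y = 1 := by linear_combination - e
          exact Or.inl ⟨Or.inr (Or.inr ⟨hx', hy'⟩), (slt_of_eps_one e1).1⟩
  · -- no Far pair
    push_neg at hFar
    have lemma3 : ∀ x y z : P, idx y = idx x + 1 → idx z = idx x + 1 + 1 → False := by
      intro x y z hy hz
      have hxy : x ≠ y := by intro h; rw [h] at hy; exact q5 (idx y) hy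
      have hyz : y ≠ z := by
        intro h; rw [h] at hy; rw [hy] at hz; exact q5 (idx x + 1) (hy ▸ hz)
      have hxz : x ≠ z := by
        intro h; rw [h] at hz
        exact (by decide : ∀ u : ZMod 3, u ≠ u + 1 + 1) (idx z) hz
      rcases tri (le := le) hxy with h1 | h1 | h1
      · -- x < y, so x,y incomparable in le'
        have e := hpot x y
        rw [eps_of_slt h1, hy] at e
        have e0 : eps le' x y = 0 := by
          rw [e]; exact (by decide : ∀ u : ZMod 3, 1 + (u - (u + 1)) = 0) (idx x)
        have hxy' := incomp_of_eps_zero hxy e0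
        rcases tri (le := le) hyz with h2 | h2 | h2
        · have e := hpot y z
          rw [eps_of_slt h2, hy, hz] at e
          have e0' : eps le' y z = 0 := by
            rw [e]; exact (by decide : ∀ u : ZMod 3, 1 + (u + 1 - (u + 1 + 1)) = 0) (idx x)
          have hyz' := incomp_of_eps_zero hyz e0'
          rcases tri (le := le) hxz with h3 | h3 | h3
          · refine hFar x z h3.1 h3.2 ?_
            have e := hpot x z
            rw [eps_of_slt h3, hz] at e
            have e2 : eps le' x z = 2 := by
              rw [e]; exact (by decide : ∀ u : ZMod 3, 1 + (u - (u + 1 + 1)) = 2) (idx x)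
            exact (slt_of_eps_two e2).1
          · exact hxz (hanti x z (htr _ _ _ h1.1 h2.1) h3.1)
          · exact h3.1 (htr _ _ _ h1.1 h2.1)
        · refine hFar z y h2.1 h2.2 ?_
          have e := hpot y z
          rw [eps_of_gt hanti h2, hy, hz] at e
          have e1 : eps le' y z = 1 := by
            rw [e]; exact (by decide : ∀ u : ZMod 3, 2 + (u + 1 - (u + 1 + 1)) = 1) (idx x)
          exact (slt_of_eps_one e1).1
        · have e := hpot y z
          rw [eps_of_incomp h2, hy, hz] at e
          have e2 : eps le' y z = 2 := by
            rw [e]; exact (by decide : ∀ u : ZMod 3, 0 + (u + 1 - (u + 1 + 1)) = 2) (idx x)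
          have hzy' := (slt_of_eps_two e2).1
          rcases tri (le := le) hxz with h3 | h3 | h3
          · refine hFar x z h3.1 h3.2 ?_
            have e := hpot x z
            rw [eps_of_slt h3, hz] at e
            have e2' : eps le' x z = 2 := by
              rw [e]; exact (by decide : ∀ u : ZMod 3, 1 + (u - (u + 1 + 1)) = 2) (idx x)
            exact (slt_of_eps_two e2').1
          · exact h2.2 (htr _ _ _ h3.1 h1.1)
          · have e := hpot x z
            rw [eps_of_incomp h3, hz] at e
            have e1 : eps le' x z = 1 := by
              rw [e]; exact (by decide : ∀ u : ZMod 3, 0 + (u - (u + 1 + 1)) = 1) (idx x)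
            exact hxy'.1 (ht' _ _ _ (slt_of_eps_one e1).1 hzy')
      · refine hFar y x h1.1 h1.2 ?_
        have e := hpot x y
        rw [eps_of_gt hanti h1, hy] at e
        have e1 : eps le' x y = 1 := by
          rw [e]; exact (by decide : ∀ u : ZMod 3, 2 + (u - (u + 1)) = 1) (idx x)
        exact (slt_of_eps_one e1).1
      · have e := hpot x y
        rw [eps_of_incomp h1, hy] at e
        have e2 : eps le' x y = 2 := by
          rw [e]; exact (by decide : ∀ u : ZMod 3, 0 + (u - (u + 1)) = 2) (idx x)
        have hyx' := (slt_of_eps_two e2).1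
        rcases tri (le := le) hyz with h2 | h2 | h2
        · have e := hpot y z
          rw [eps_of_slt h2, hy, hz] at e
          have e0 : eps le' y z = 0 := by
            rw [e]; exact (by decide : ∀ u : ZMod 3, 1 + (u + 1 - (u + 1 + 1)) = 0) (idx x)
          have hyz' := incomp_of_eps_zero hyz e0
          rcases tri (le := le) hxz with h3 | h3 | h3
          · refine hFar x z h3.1 h3.2 ?_
            have e := hpot x z
            rw [eps_of_slt h3, hz] at e
            have e2' : eps le' x z = 2 := by
              rw [e]; exact (by decide : ∀ u : ZMod 3, 1 + (u - (u + 1 + 1)) = 2) (idx x)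
            exact (slt_of_eps_two e2').1
          · exact h1.2 (htr _ _ _ h2.1 h3.1)
          · have e := hpot x z
            rw [eps_of_incomp h3, hz] at e
            have e1 : eps le' x z = 1 := by
              rw [e]; exact (by decide : ∀ u : ZMod 3, 0 + (u - (u + 1 + 1)) = 1) (idx x)
            exact hyz'.1 (ht' _ _ _ hyx' (slt_of_eps_one e1).1)
        · refine hFar z y h2.1 h2.2 ?_
          have e := hpot y z
          rw [eps_of_gt hanti h2, hy, hz] at e
          have e1 : eps le' y z = 1 := by
            rw [e]; exact (by decide : ∀ u : ZMod 3, 2 + (u + 1 - (u + 1 + 1)) = 1) (idx x)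
          exact (slt_of_eps_one e1).1
        · have e := hpot y z
          rw [eps_of_incomp h2, hy, hz] at e
          have e2' : eps le' y z = 2 := by
            rw [e]; exact (by decide : ∀ u : ZMod 3, 0 + (u + 1 - (u + 1 + 1)) = 2) (idx x)
          have hzy' := (slt_of_eps_two e2').1
          rcases tri (le := le) hxz with h3 | h3 | h3
          · refine hFar x z h3.1 h3.2 ?_
            have e := hpot x z
            rw [eps_of_slt h3, hz] at e
            have e2'' : eps le' x z = 2 := by
              rw [e]; exact (by decide : ∀ u : ZMod 3, 1 + (u - (u + 1 + 1)) = 2) (idx x)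
            exact (slt_of_eps_two e2'').1
          · have e := hpot x z
            rw [eps_of_gt hanti h3, hz] at e
            have e0 : eps le' x z = 0 := by
              rw [e]; exact (by decide : ∀ u : ZMod 3, 2 + (u - (u + 1 + 1)) = 0) (idx x)
            exact (incomp_of_eps_zero hxz e0).2 (ht' _ _ _ hzy' hyx')
          · have e := hpot x z
            rw [eps_of_incomp h3, hz] at e
            have e1 : eps le' x z = 1 := by
              rw [e]; exact (by decide : ∀ u : ZMod 3, 0 + (u - (u + 1 + 1)) = 1) (idx x)
            exact hxy (ha' x y (ht' _ _ _ (slt_of_eps_one e1).1 hzy') hyx')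
    by_cases hTwo : ∃ b c : P, idx c = idx b + 1
    · obtain ⟨b₁, c₁, hbc⟩ := hTwo
      set u := idx b₁ with hu
      have hE : ∀ z : P, idx z ≠ u - 1 := by
        intro z hz
        refine lemma3 b₁ c₁ z hbc ?_
        rw [hz]
        exact (by decide : ∀ w : ZMod 3, w - 1 = w + 1 + 1) u
      have hBC : ∀ z : P, idx z = u ∨ idx z = u + 1 := by
        intro z
        rcases z3cases (idx z) u with h | h | h
        · exact Or.inl h
        · exact Or.inr h
        · exact (hE z h).elim
      refine ⟨∅, {z : P | idx z = u + 1}, ⟨by simp, ?_, ?_, ?_⟩, ?_⟩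
      · intro x hx; exact absurd hx (Set.notMem_empty x)
      · -- upset
        intro x hx y hxy'
        have hix : idx x = u + 1 := hx
        by_cases hxy : y = x
        · show idx y = u + 1; rw [hxy]; exact hix
        rcases hBC y with h | h
        · exfalso
          have hnxy : x ≠ y := fun hh => hxy hh.symm
          have e := hpot x y
          rw [eps_of_slt ⟨hxy', hnxy⟩, hix, h] at e
          have e2 : eps le' x y = 2 := by rw [e]; ring
          exact hFar x y hxy' hnxy (slt_of_eps_two e2).1
        · exact h
      · intro a haA; exact absurd haA (Set.notMem_empty a)
      · funext x y
        apply propext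
        by_cases hxy : x = y
        · subst hxy
          constructor
          · intro _; exact hr' x
          · intro _
            rcases hBC x with h | h
            · exact Or.inl ⟨Or.inr (Or.inl ⟨Set.notMem_empty x,
                fun hm => q5 u (h.symm.trans hm), Set.notMem_empty x,
                fun hm => q5 u (h.symm.trans hm)⟩), hrefl x⟩
            · exact Or.inl ⟨Or.inr (Or.inr ⟨h, h⟩), hrefl x⟩
        rcases hBC x with hx' | hx' <;> rcases hBC y with hy' | hy'
        · -- (B, B)
          constructor
          · rintro (⟨_, hl⟩ | ⟨_, _, hm, _⟩ | ⟨_, hm⟩ | ⟨hm, _⟩)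
            · have e := hpot x y
              rw [eps_of_slt ⟨hl, hxy⟩, hx', hy'] at e
              have e1 : eps le' x y = 1 := by rw [e]; ring
              exact (slt_of_eps_one e1).1
            · exact absurd hm (Set.notMem_empty y)
            · exact absurd hm (Set.notMem_empty y)
            · exact absurd (hx'.symm.trans hm) (q5 u)
          · intro hl'
            have e := hpot x y
            rw [eps_of_slt ⟨hl', hxy⟩, hx', hy'] at e
            have e1 : eps le x y = 1 := by linear_combination - e
            exact Or.inl ⟨Or.inr (Or.inl ⟨Set.notMem_empty x,
              fun hm => q5 u (hx'.symm.trans hm), Set.notMem_empty y,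
              fun hm => q5 u (hy'.symm.trans hm)⟩), (slt_of_eps_one e1).1⟩
        · -- (B, C) : impossible
          constructor
          · rintro (⟨hb, hl⟩ | ⟨_, _, hm, _⟩ | ⟨_, hm⟩ | ⟨hm, _⟩)
            · rcases hb with ⟨hm, _⟩ | ⟨_, _, _, hm⟩ | ⟨hm, _⟩
              · exact absurd hm (Set.notMem_empty x)
              · exact absurd hy' hm
              · exact absurd (hx'.symm.trans hm) (q5 u)
            · exact absurd hm (Set.notMem_empty y)
            · exact absurd hm (Set.notMem_empty y)
            · exact absurd (hx'.symm.trans hm) (q5 u)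
          · intro hl'
            rcases tri (le := le) hxy with h | h | h
            · have e := hpot x y
              rw [eps_of_slt ⟨hl', hxy⟩, eps_of_slt h, hx', hy'] at e
              exact absurd e ((by decide : ∀ w : ZMod 3, (1 : ZMod 3) ≠ 1 + (w - (w + 1))) u)
            · exact absurd hl' (hFar y x h.1 h.2)
            · have e := hpot x y
              rw [eps_of_slt ⟨hl', hxy⟩, eps_of_incomp h, hx', hy'] at e
              exact absurd e ((by decide : ∀ w : ZMod 3, (1 : ZMod 3) ≠ 0 + (w - (w + 1))) u)
        · -- (C, B)
          constructor
          · rintro (⟨hb, hl⟩ | ⟨_, hm, _, _⟩ | ⟨_, hm⟩ | ⟨_, _, _, hinc⟩)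
            · rcases hb with ⟨hm, _⟩ | ⟨_, hm, _, _⟩ | ⟨_, hm⟩
              · exact absurd hm (Set.notMem_empty x)
              · exact absurd hx' hm
              · exact absurd (hy'.symm.trans hm) (q5 u)
            · exact absurd hx' hm
            · exact absurd hm (Set.notMem_empty y)
            · have e := hpot x y
              rw [eps_of_incomp hinc, hx', hy'] at e
              have e1 : eps le' x y = 1 := by rw [e]; ring
              exact (slt_of_eps_one e1).1
          · intro hl'
            rcases tri (le := le) hxy with h | h | h
            · have e := hpot x y
              rw [eps_of_slt ⟨hl', hxy⟩, eps_of_slt h, hx', hy'] at e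
              exact absurd e ((by decide : ∀ w : ZMod 3, (1 : ZMod 3) ≠ 1 + (w + 1 - w)) u)
            · have e := hpot x y
              rw [eps_of_slt ⟨hl', hxy⟩, eps_of_gt hanti h, hx', hy'] at e
              exact absurd e ((by decide : ∀ w : ZMod 3, (1 : ZMod 3) ≠ 2 + (w + 1 - w)) u)
            · exact Or.inr (Or.inr (Or.inr ⟨hx', Set.notMem_empty y,
                fun hm => q5 u (hy'.symm.trans hm), h⟩))
        · -- (C, C)
          constructor
          · rintro (⟨_, hl⟩ | ⟨_, hm, _, _⟩ | ⟨_, hm⟩ | ⟨_, _, hm, _⟩)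
            · have e := hpot x y
              rw [eps_of_slt ⟨hl, hxy⟩, hx', hy'] at e
              have e1 : eps le' x y = 1 := by rw [e]; ring
              exact (slt_of_eps_one e1).1
            · exact absurd hx' hm
            · exact absurd hm (Set.notMem_empty y)
            · exact absurd hy' hm
          · intro hl'
            have e := hpot x y
            rw [eps_of_slt ⟨hl', hxy⟩, hx', hy'] at e
            have e1 : eps le x y = 1 := by linear_combination - e
            exact Or.inl ⟨Or.inr (Or.inr ⟨hx', hy'⟩), (slt_of_eps_one e1).1⟩
    · -- all indices equal : le' = le
      push_neg at hTwo
      have hall : ∀ x y : P, idx x = idx y := by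
        intro x y
        rcases z3cases (idx x) (idx y) with h | h | h
        · exact h
        · exact absurd h (hTwo y x)
        · exfalso
          refine hTwo x y ?_
          rw [h]
          exact (by decide : ∀ w : ZMod 3, w = w - 1 + 1) (idx y)
      refine ⟨∅, ∅, ⟨by simp, ?_, ?_, ?_⟩, ?_⟩
      · intro x hx; exact absurd hx (Set.notMem_empty x)
      · intro x hx; exact absurd hx (Set.notMem_empty x)
      · intro a haA; exact absurd haA (Set.notMem_empty a)
      · funext x y
        apply propext
        by_cases hxy : x = y
        · subst hxy
          exact ⟨fun _ => hr' x, fun _ => Or.inl ⟨Or.inr (Or.inl ⟨Set.notMem_empty x,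
            Set.notMem_empty x, Set.notMem_empty x, Set.notMem_empty x⟩), hrefl x⟩⟩
        have e := hpot x y
        rw [hall x y] at e
        constructor
        · rintro (⟨_, hl⟩ | ⟨_, _, hm, _⟩ | ⟨hm, _⟩ | ⟨hm, _⟩)
          · rw [eps_of_slt ⟨hl, hxy⟩] at e
            have e1 : eps le' x y = 1 := by rw [e]; ring
            exact (slt_of_eps_one e1).1
          · exact absurd hm (Set.notMem_empty y)
          · exact absurd hm (Set.notMem_empty x)
          · exact absurd hm (Set.notMem_empty x)
        · intro hl'
          rw [eps_of_slt ⟨hl', hxy⟩] at e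
          have e1 : eps le x y = 1 := by linear_combination - e
          exact Or.inl ⟨Or.inr (Or.inl ⟨Set.notMem_empty x, Set.notMem_empty x,
            Set.notMem_empty y, Set.notMem_empty y⟩), (slt_of_eps_one e1).1⟩

theorem stmt19 [Countable P] (le : P → P → Prop) [IsPartialOrder P le]
    (hext : ExtProp le) (α : Equiv.Perm P)
    (h1 : ∀ a b c : P, O1rel le a b c ↔ O1rel le (α a) (α b) (α c))
    (h2 : ∀ a b c : P, O2rel le a b c ↔ O2rel le (α a) (α b) (α c))
    (h3 : ∀ a b c : P, O3rel le a b c ↔ O3rel le (α a) (α b) (α c))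
    (le' : P → P → Prop) (hle' : le' = fun x y => le (α.symm x) (α.symm y)) :
    (∀ a b c : P,
      RotEquiv (restrictRel le {a, b, c}) (restrictRel le' {a, b, c})) ∧
    ∃ A C : Set P, RotOK le A C ∧ Rot le A C = le' := by
  have hrefl : ∀ x : P, le x x := fun x => refl_of le x
  have htr : ∀ a b c : P, le a b → le b c → le a c := fun a b c h h' => _root_.trans_of le h h'
  have hanti : ∀ u w : P, le u w → le w u → u = w := fun u w h h' => antisymm_of le h h'
  have hsub : ∀ x y, le' x y ↔ le (α.symm x) (α.symm y) := fun x y => by rw [hle']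
  have hr' : ∀ x, le' x x := fun x => (hsub x x).mpr (hrefl _)
  have ht' : ∀ a b c : P, le' a b → le' b c → le' a c := fun a b c h h' =>
    (hsub a c).mpr (htr _ _ _ ((hsub a b).mp h) ((hsub b c).mp h'))
  have ha' : ∀ u w, le' u w → le' w u → u = w := fun u w h h' =>
    α.symm.injective (hanti _ _ ((hsub u w).mp h) ((hsub w u).mp h'))
  have hSLT : ∀ u w, SLT le' u w ↔ SLT le (α.symm u) (α.symm w) := by
    intro u w
    constructor
    · rintro ⟨h, hn⟩; exact ⟨(hsub u w).mp h, fun e => hn (α.symm.injective e)⟩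
    · rintro ⟨h, hn⟩; exact ⟨(hsub u w).mpr h, fun e => hn (congrArg _ e)⟩
  have hInc : ∀ u w, Incomp le' u w ↔ Incomp le (α.symm u) (α.symm w) := by
    intro u w
    constructor
    · rintro ⟨h, h'⟩; exact ⟨fun hh => h ((hsub u w).mpr hh), fun hh => h' ((hsub w u).mpr hh)⟩
    · rintro ⟨h, h'⟩; exact ⟨fun hh => h ((hsub u w).mp hh), fun hh => h' ((hsub w u).mp hh)⟩
  have key : ∀ x y z : P, O2rel le' x y z ↔ O2rel le x y z := by
    intro x y z
    have e1 : O2rel le' x y z ↔ O2rel le (α.symm x) (α.symm y) (α.symm z) := by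
      simp only [O2rel, hSLT, hInc]
    have e2 := h2 (α.symm x) (α.symm y) (α.symm z)
    simp only [Equiv.apply_symm_apply] at e2
    exact e1.trans e2
  have hsum : ∀ x y z : P, x ≠ y → y ≠ z → x ≠ z →
      eps le' x y + eps le' y z + eps le' z x = eps le x y + eps le y z + eps le z x := by
    intro x y z hxy hyz hxz
    have i2 : eps le' x y + eps le' y z + eps le' z x = 1 ↔
        eps le x y + eps le y z + eps le z x = 1 := by
      rw [← o2_iff ht' ha' hxy hyz hxz, ← o2_iff htr hanti hxy hyz hxz]
      exact key x y z
    have i2' : eps le' z y + eps le' y x + eps le' x z = 1 ↔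
        eps le z y + eps le y x + eps le x z = 1 := by
      rw [← o2_iff ht' ha' hyz.symm hxy.symm (fun h => hxz h.symm),
        ← o2_iff htr hanti hyz.symm hxy.symm (fun h => hxz h.symm)]
      exact key z y x
    rw [eps_comm ha' y z, eps_comm ha' x y, eps_comm ha' z x,
      eps_comm hanti y z, eps_comm hanti x y, eps_comm hanti z x] at i2'
    have i3 : (-(eps le' x y + eps le' y z + eps le' z x) = 1) ↔
        (-(eps le x y + eps le y z + eps le z x) = 1) := by
      constructor
      · intro h
        have := i2'.mp (by linear_combination h)
        linear_combination this
      · intro h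
        have := i2'.mpr (by linear_combination h)
        linear_combination this
    exact zmod3_cmp _ _ i2 (zmod3_neg2 _ _ i3)
  obtain ⟨A, C, hOK, hRot⟩ := main_exists le le' hrefl htr hanti hext hr' ht' ha' hsum
  refine ⟨?_, A, C, hOK, hRot⟩
  intro a b c
  exact Relation.ReflTransGen.single (rotstep_restrict hOK hRot {a, b, c})
end
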